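/- Let u be a smooth plurisubharmonic function on a neighborhood V of the origin in C^n, let r(z,z_{n+1}) = 2·Re(z_{n+1}) + u(z), let U be a neighborhood of 0 contained in V, let δ > 0, and let ρ_δ : U → R be smooth. Define λ̃_δ(z, z_{n+1}) = e^{r(z,z_{n+1})/δ} + e^{-3}·ρ_δ(z) on U × C. Then for every z' = (z, z_{n+1}) ∈ U × C with r(z') ≥ −3δ and every s = (s_1, …, s_{n+1}) ∈ C^{n+1}, setting t = (s_1, …, s_n, s_{n+1} − Σ_{i=1}^n s_i·(∂u/∂z_i)(z)) ∈ C^{n+1}, one has H_{λ̃_δ}(z'; t) ≥ e^{-3}·[ |s_{n+1}|²/δ² + H_{u/δ + ρ_δ}(z; (s_1, …, s_n)) ]. -/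

import Mathlib

open scoped BigOperators

noncomputable section

abbrev Cn (n : ℕ) := EuclideanSpace ℂ (Fin n)

/-- Complex Hessian (Levi form) of a real-valued function on a complex normed space:
`H_f(z; s) = (1/4)(D²f(z)[s,s] + D²f(z)[I•s, I•s]) = Σ_{i,j} f_{z_i z̄_j}(z) s_i s̄_j`. -/
noncomputable def levi {E : Type*} [NormedAddCommGroup E] [NormedSpace ℂ E]
    (f : E → ℝ) (z s : E) : ℝ :=
  (1 / 4) * (iteratedFDeriv ℝ 2 f z ![s, s]
    + iteratedFDeriv ℝ 2 f z ![Complex.I • s, Complex.I • s])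

/-- Plurisubharmonic on a set: smooth there with positive semidefinite complex Hessian. -/
def PSHOn {E : Type*} [NormedAddCommGroup E] [NormedSpace ℂ E]
    (f : E → ℝ) (V : Set E) : Prop :=
  ContDiffOn ℝ (⊤ : ℕ∞) f V ∧ ∀ z ∈ V, ∀ s : E, 0 ≤ levi f z s

/-- Projection `C^{n+1} → C^n` onto the first `n` coordinates. -/
def proj (n : ℕ) (w : Cn (n + 1)) : Cn n := WithLp.toLp 2 (fun i : Fin n => w i.castSucc)

/-- Defining function `r(z, z_{n+1}) = 2 Re z_{n+1} + u(z)` of the rigid domain. -/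
def rfun (n : ℕ) (u : Cn n → ℝ) (w : Cn (n + 1)) : ℝ :=
  2 * (w (Fin.last n)).re + u (proj n w)

/-- Wirtinger derivative `∂u/∂z_i (z) = (1/2)(∂u/∂x_i - i ∂u/∂y_i)(z)`. -/
noncomputable def wirt (n : ℕ) (u : Cn n → ℝ) (z : Cn n) (i : Fin n) : ℂ :=
  (1 / 2 : ℂ) * ((fderiv ℝ u z (EuclideanSpace.single i 1) : ℝ)
    - Complex.I * (fderiv ℝ u z (Complex.I • EuclideanSpace.single i 1) : ℝ))

/-- Coordinate expression `t = (s_1, …, s_n, s_{n+1} - Σ_i s_i u_{z_i}(z))` of the tangential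
field `L' = Σ s_i L_i`. -/
noncomputable def Tmap (n : ℕ) (u : Cn n → ℝ) (z : Cn n) (s : Cn (n + 1)) : Cn (n + 1) :=
  WithLp.toLp 2 (fun j => if j = Fin.last n then
    s (Fin.last n) - ∑ i : Fin n, s i.castSucc * wirt n u z i
  else s j)

/-! ### Auxiliary lemmas -/

section Aux

variable {E F : Type*} [NormedAddCommGroup E] [NormedSpace ℂ E]
  [NormedAddCommGroup F] [NormedSpace ℂ F]

lemma levi_eq (f : E → ℝ) (z s : E) :
    levi f z s = (1/4) * (fderiv ℝ (fderiv ℝ f) z s s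
      + fderiv ℝ (fderiv ℝ f) z (Complex.I • s) (Complex.I • s)) := by
  rw [levi, iteratedFDeriv_two_apply, iteratedFDeriv_two_apply]; norm_num

lemma fderiv2_add {f g : E → ℝ} {z : E} (hf : ContDiffAt ℝ 2 f z) (hg : ContDiffAt ℝ 2 g z) :
    fderiv ℝ (fderiv ℝ (fun x => f x + g x)) z
      = fderiv ℝ (fderiv ℝ f) z + fderiv ℝ (fderiv ℝ g) z := by
  have h1 : fderiv ℝ (fun x => f x + g x) =ᶠ[nhds z] fun x => fderiv ℝ f x + fderiv ℝ g x := by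
    filter_upwards [hf.eventually (by simp), hg.eventually (by simp)] with x hfx hgx
    exact fderiv_fun_add (hfx.differentiableAt two_ne_zero) (hgx.differentiableAt two_ne_zero)
  rw [h1.fderiv_eq]
  exact fderiv_fun_add ((hf.fderiv_right (m := 1) (le_refl 2)).differentiableAt one_ne_zero)
    ((hg.fderiv_right (m := 1) (le_refl 2)).differentiableAt one_ne_zero)

lemma levi_add {f g : E → ℝ} {z : E} (hf : ContDiffAt ℝ 2 f z) (hg : ContDiffAt ℝ 2 g z)
    (s : E) : levi (fun x => f x + g x) z s = levi f z s + levi g z s := by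
  simp only [levi_eq, fderiv2_add hf hg, ContinuousLinearMap.add_apply]; ring

lemma fderiv2_const_mul {f : E → ℝ} {z : E} (hf : ContDiffAt ℝ 2 f z) (c : ℝ) :
    fderiv ℝ (fderiv ℝ (fun x => c * f x)) z = c • fderiv ℝ (fderiv ℝ f) z := by
  have h1 : fderiv ℝ (fun x => c * f x) =ᶠ[nhds z] fun x => c • fderiv ℝ f x := by
    filter_upwards [hf.eventually (by simp)] with x hfx
    exact fderiv_const_mul (hfx.differentiableAt two_ne_zero) c
  rw [h1.fderiv_eq]
  exact fderiv_fun_const_smul ((hf.fderiv_right (m := 1) (le_refl 2)).differentiableAt one_ne_zero) c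

lemma levi_const_mul {f : E → ℝ} {z : E} (hf : ContDiffAt ℝ 2 f z) (c : ℝ) (s : E) :
    levi (fun x => c * f x) z s = c * levi f z s := by
  simp only [levi_eq, fderiv2_const_mul hf c, ContinuousLinearMap.smul_apply, smul_eq_mul]; ring

lemma fderiv2_comp_clm (L : E →L[ℂ] F) {f : F → ℝ} {w : E} (hf : ContDiffAt ℝ 2 f (L w))
    (v v' : E) :
    fderiv ℝ (fderiv ℝ (fun x => f (L x))) w v v'
      = fderiv ℝ (fderiv ℝ f) (L w) (L v) (L v') := by
  set Lr := L.restrictScalars ℝ with hLr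
  have h1 : fderiv ℝ (fun x => f (L x)) =ᶠ[nhds w]
      fun x => (fderiv ℝ f (L x)).comp Lr := by
    filter_upwards [L.continuous.continuousAt.eventually (hf.eventually (by simp))] with x hfx
    exact ((hfx.differentiableAt two_ne_zero).hasFDerivAt.comp x Lr.hasFDerivAt).fderiv
  rw [h1.fderiv_eq]
  set Φ : (F →L[ℝ] ℝ) →L[ℝ] (E →L[ℝ] ℝ) := (ContinuousLinearMap.compL ℝ E F ℝ).flip Lr with hΦ
  have h2 : HasFDerivAt (fun x => (fderiv ℝ f (L x)).comp Lr)
      (Φ.comp ((fderiv ℝ (fderiv ℝ f) (L w)).comp Lr)) w := by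
    have hd : HasFDerivAt (fun x => fderiv ℝ f (L x))
        ((fderiv ℝ (fderiv ℝ f) (L w)).comp Lr) w :=
      (((hf.fderiv_right (m := 1) (le_refl 2)).differentiableAt one_ne_zero).hasFDerivAt).comp w Lr.hasFDerivAt
    exact Φ.hasFDerivAt.comp w hd
  rw [h2.fderiv]
  rfl

lemma levi_comp_clm (L : E →L[ℂ] F) {f : F → ℝ} {w : E} (hf : ContDiffAt ℝ 2 f (L w)) (t : E) :
    levi (fun x => f (L x)) w t = levi f (L w) (L t) := by
  simp only [levi_eq, fderiv2_comp_clm L hf, map_smul]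

lemma fderiv2_exp {g : E → ℝ} {w : E} (hg : ContDiffAt ℝ 2 g w) (v v' : E) :
    fderiv ℝ (fderiv ℝ (fun x => Real.exp (g x))) w v v'
      = Real.exp (g w) * (fderiv ℝ g w v * fderiv ℝ g w v'
          + fderiv ℝ (fderiv ℝ g) w v v') := by
  have h1 : fderiv ℝ (fun x => Real.exp (g x)) =ᶠ[nhds w]
      fun x => Real.exp (g x) • fderiv ℝ g x := by
    filter_upwards [hg.eventually (by simp)] with x hgx
    exact ((hgx.differentiableAt two_ne_zero).hasFDerivAt.exp).fderiv
  rw [h1.fderiv_eq]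
  have hc : HasFDerivAt (fun x => Real.exp (g x))
      (Real.exp (g w) • fderiv ℝ g w) w :=
    (hg.differentiableAt two_ne_zero).hasFDerivAt.exp
  have hB : HasFDerivAt (fderiv ℝ g) (fderiv ℝ (fderiv ℝ g) w) w :=
    ((hg.fderiv_right (m := 1) (le_refl 2)).differentiableAt one_ne_zero).hasFDerivAt
  have h2 : HasFDerivAt (fun x => Real.exp (g x) • fderiv ℝ g x) _ w := hc.smul hB
  rw [h2.fderiv]
  simp [ContinuousLinearMap.smul_apply, ContinuousLinearMap.smulRight_apply,
    ContinuousLinearMap.add_apply, smul_eq_mul]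
  ring

lemma levi_exp {g : E → ℝ} {w : E} (hg : ContDiffAt ℝ 2 g w) (t : E) :
    levi (fun x => Real.exp (g x)) w t
      = Real.exp (g w) * ((1/4) * ((fderiv ℝ g w t)^2
          + (fderiv ℝ g w (Complex.I • t))^2) + levi g w t) := by
  simp only [levi_eq, fderiv2_exp hg]; ring

lemma levi_clm (ℓ : E →L[ℝ] ℝ) (z s : E) : levi (⇑ℓ) z s = 0 := by
  have h1 : fderiv ℝ (⇑ℓ) = fun _ => ℓ := funext fun x => ℓ.fderiv
  simp only [levi_eq, h1, fderiv_const]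
  simp

lemma complex_smul_split (c : ℂ) (v : E) : c • v = c.re • v + c.im • (Complex.I • v) := by
  rw [← Complex.re_add_im c, add_smul, mul_smul]
  norm_num [Complex.coe_smul]

lemma eucl_sum_single {m : ℕ} (s : EuclideanSpace ℂ (Fin m)) :
    s = ∑ i, (s i) • EuclideanSpace.single i (1 : ℂ) := by
  have := (EuclideanSpace.basisFun (Fin m) ℂ).sum_repr s
  simp only [EuclideanSpace.basisFun_repr, EuclideanSpace.basisFun_apply] at this
  exact this.symm

lemma clm_apply_eq_sum {m : ℕ} (T : EuclideanSpace ℂ (Fin m) →L[ℝ] ℝ)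
    (s : EuclideanSpace ℂ (Fin m)) :
    T s = ∑ i, ((s i).re * T (EuclideanSpace.single i 1)
      + (s i).im * T (Complex.I • EuclideanSpace.single i 1)) := by
  conv_lhs => rw [eucl_sum_single s]
  rw [map_sum]
  refine Finset.sum_congr rfl fun i _ => ?_
  rw [complex_smul_split (s i)]
  simp [smul_eq_mul]

end Aux

/-- Wirtinger representation of a real first derivative. -/
lemma fderiv_eq_re_sum {m : ℕ} (u : Cn m → ℝ) (z s : Cn m) :
    fderiv ℝ u z s = 2 * (∑ i, s i * wirt m u z i).re := by
  rw [clm_apply_eq_sum (fderiv ℝ u z) s, Complex.re_sum, Finset.mul_sum]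
  refine Finset.sum_congr rfl fun i _ => ?_
  simp [wirt, Complex.mul_re, Complex.sub_re, Complex.sub_im, Complex.mul_im]
  ring

lemma fderiv_I_smul_eq {m : ℕ} (u : Cn m → ℝ) (z s : Cn m) :
    fderiv ℝ u z (Complex.I • s) = -2 * (∑ i, s i * wirt m u z i).im := by
  rw [fderiv_eq_re_sum]
  have h1 : ∀ i : Fin m, (Complex.I • s : Cn m) i = Complex.I * s i := fun i => rfl
  have h2 : (∑ i, (Complex.I • s : Cn m) i * wirt m u z i)
      = Complex.I * ∑ i, s i * wirt m u z i := by
    rw [Finset.mul_sum]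
    refine Finset.sum_congr rfl fun i _ => ?_
    rw [h1]; ring
  rw [h2, Complex.mul_re]
  simp

/-- The projection as a continuous ℂ-linear map. -/
def projL (n : ℕ) : Cn (n + 1) →L[ℂ] Cn n :=
  ((PiLp.continuousLinearEquiv 2 ℂ (fun _ : Fin n => ℂ)).symm.toContinuousLinearMap).comp
    (ContinuousLinearMap.pi fun i : Fin n => EuclideanSpace.proj i.castSucc)

lemma projL_apply (n : ℕ) (w : Cn (n + 1)) : projL n w = proj n w := by
  ext i; rfl

/-- `2 Re z_{n+1}` as a continuous ℝ-linear map. -/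
def lastRe (n : ℕ) : Cn (n + 1) →L[ℝ] ℝ :=
  (2 : ℝ) • (Complex.reCLM.comp
    (((EuclideanSpace.proj (Fin.last n) : Cn (n+1) →L[ℂ] ℂ)).restrictScalars ℝ))

lemma lastRe_apply (n : ℕ) (w : Cn (n + 1)) : lastRe n w = 2 * (w (Fin.last n)).re := rfl

lemma rfun_eq (n : ℕ) (u : Cn n → ℝ) :
    rfun n u = fun w => lastRe n w + u (projL n w) := by
  funext w; simp [rfun, lastRe_apply, projL_apply]

lemma proj_Tmap (n : ℕ) (u : Cn n → ℝ) (z : Cn n) (s : Cn (n + 1)) :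
    proj n (Tmap n u z s) = proj n s := by
  ext i
  simp [proj, Tmap, (Fin.castSucc_lt_last i).ne]

lemma Tmap_last (n : ℕ) (u : Cn n → ℝ) (z : Cn n) (s : Cn (n + 1)) :
    Tmap n u z s (Fin.last n) = s (Fin.last n) - ∑ i : Fin n, s i.castSucc * wirt n u z i := by
  simp [Tmap]

lemma proj_smul (n : ℕ) (c : ℂ) (w : Cn (n + 1)) : proj n (c • w) = c • proj n w := by
  ext i; rfl

/-- the key chain of inequalities in Step 1 of the Main Lemma. -/
theorem step_one_key_inequality (n : ℕ) (V : Set (Cn n)) (hV : IsOpen V)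
    (h0V : (0 : Cn n) ∈ V) (u : Cn n → ℝ) (hu : PSHOn u V)
    (U : Set (Cn n)) (hUo : IsOpen U) (h0U : (0 : Cn n) ∈ U) (hUV : U ⊆ V)
    (δ : ℝ) (hδ : 0 < δ) (ρ : Cn n → ℝ) (hρ : ContDiffOn ℝ (⊤ : ℕ∞) ρ U) :
    ∀ w : Cn (n + 1), proj n w ∈ U → -(3 * δ) ≤ rfun n u w →
      ∀ s : Cn (n + 1),
        Real.exp (-3) * (‖s (Fin.last n)‖ ^ 2 / δ ^ 2
            + levi (fun z => u z / δ + ρ z) (proj n w) (proj n s)) ≤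
          levi (fun w' => Real.exp (rfun n u w' / δ) + Real.exp (-3) * ρ (proj n w')) w
            (Tmap n u (proj n w) s) := by
  intro w hzU hr s
  set z := proj n w with hz
  set t := Tmap n u z s with ht
  set s' := proj n s with hs'
  have hzV : z ∈ V := hUV hzU
  -- smoothness facts
  have hu2 : ContDiffAt ℝ 2 u z := (hu.1.contDiffAt (hV.mem_nhds hzV)).of_le (WithTop.coe_le_coe.mpr le_top)
  have hρ2 : ContDiffAt ℝ 2 ρ z := (hρ.contDiffAt (hUo.mem_nhds hzU)).of_le (WithTop.coe_le_coe.mpr le_top)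
  have hprojL : projL n w = z := projL_apply n w
  have hcomp : ContDiffAt ℝ 2 (fun w' => u (projL n w')) w := by
    refine ContDiffAt.comp w (by rwa [hprojL]) ?_
    exact ((projL n).restrictScalars ℝ).contDiff.contDiffAt
  have hρcomp : ContDiffAt ℝ 2 (fun w' => ρ (projL n w')) w := by
    refine ContDiffAt.comp w (by rwa [hprojL]) ?_
    exact ((projL n).restrictScalars ℝ).contDiff.contDiffAt
  have hr2 : ContDiffAt ℝ 2 (rfun n u) w := by
    rw [rfun_eq]
    exact ((lastRe n).contDiff.contDiffAt).add hcomp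
  have hg2 : ContDiffAt ℝ 2 (fun w' => δ⁻¹ * rfun n u w') w := contDiffAt_const.mul hr2
  have hexp2 : ContDiffAt ℝ 2 (fun w' => Real.exp (δ⁻¹ * rfun n u w')) w :=
    (Real.contDiff_exp.contDiffAt.of_le le_top).comp w hg2
  -- rewrite the big function
  have hfun : (fun w' => Real.exp (rfun n u w' / δ) + Real.exp (-3) * ρ (proj n w'))
      = fun w' => Real.exp (δ⁻¹ * rfun n u w') + Real.exp (-3) * ρ (projL n w') := by
    funext w'; rw [div_eq_inv_mul, projL_apply]
  rw [hfun]
  -- split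
  rw [levi_add hexp2 (contDiffAt_const.mul hρcomp) t]
  -- rho part
  have hρpart : levi (fun w' => Real.exp (-3) * ρ (projL n w')) w t
      = Real.exp (-3) * levi ρ z s' := by
    rw [levi_const_mul hρcomp _ t, levi_comp_clm (projL n) (by rwa [hprojL]) t, hprojL,
      projL_apply, ht, proj_Tmap]
  -- r levi
  have hlevir : levi (rfun n u) w t = levi u z s' := by
    rw [rfun_eq]
    rw [levi_add ((lastRe n).contDiff.contDiffAt) hcomp t, levi_clm,
      levi_comp_clm (projL n) (by rwa [hprojL]) t, hprojL, projL_apply, ht, proj_Tmap]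
    ring
  -- first derivative of r on t and I • t
  have hdiffr : DifferentiableAt ℝ (rfun n u) w := hr2.differentiableAt two_ne_zero
  set W : ℂ := ∑ i : Fin n, s i.castSucc * wirt n u z i with hW
  have hfderivr : ∀ v : Cn (n + 1), fderiv ℝ (rfun n u) w v
      = lastRe n v + fderiv ℝ u z (proj n v) := by
    intro v
    have : fderiv ℝ (rfun n u) w = lastRe n
        + (fderiv ℝ u z).comp ((projL n).restrictScalars ℝ) := by
      rw [rfun_eq]
      have h1 : fderiv ℝ (fun w' => (lastRe n) w') w = lastRe n := (lastRe n).fderiv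
      have h2 : fderiv ℝ (fun w' => u (projL n w')) w
          = (fderiv ℝ u z).comp ((projL n).restrictScalars ℝ) := by
        have := ((hu2.differentiableAt two_ne_zero).hasFDerivAt.comp w
          (((projL n).restrictScalars ℝ).hasFDerivAt (x := w)))
        rw [← hprojL] at this ⊢
        exact this.fderiv
      rw [fderiv_fun_add ((lastRe n).differentiableAt)
        (hcomp.differentiableAt two_ne_zero), h1, h2]
    rw [this]; rfl
  have hsum : ∀ v : Cn (n+1), (∑ i : Fin n, (proj n v) i * wirt n u z i)
      = ∑ i : Fin n, v i.castSucc * wirt n u z i := fun v => rfl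
  have hWt : (∑ i : Fin n, (proj n t) i * wirt n u z i) = W := by
    rw [ht, proj_Tmap]; rfl
  have hdrt : fderiv ℝ (rfun n u) w t = 2 * (s (Fin.last n)).re := by
    rw [hfderivr t, lastRe_apply, fderiv_eq_re_sum, hWt, ht, Tmap_last, ← hW]
    simp [Complex.sub_re]
    ring
  have hdrIt : fderiv ℝ (rfun n u) w (Complex.I • t) = -2 * (s (Fin.last n)).im := by
    rw [hfderivr _, lastRe_apply, proj_smul, fderiv_I_smul_eq, hWt]
    have hlast : (Complex.I • t : Cn (n+1)) (Fin.last n) = Complex.I * t (Fin.last n) := rfl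
    rw [hlast, ht, Tmap_last, ← hW]
    simp [Complex.mul_re, Complex.sub_re, Complex.sub_im]
    ring
  -- derivative of g = δ⁻¹ * r
  have hdg : ∀ v : Cn (n+1), fderiv ℝ (fun w' => δ⁻¹ * rfun n u w') w v
      = δ⁻¹ * fderiv ℝ (rfun n u) w v := by
    intro v
    rw [fderiv_const_mul hdiffr]
    rfl
  -- exp part levi
  have hexplevi : levi (fun w' => Real.exp (δ⁻¹ * rfun n u w')) w t
      = Real.exp (δ⁻¹ * rfun n u w) * (‖s (Fin.last n)‖ ^ 2 / δ ^ 2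
          + δ⁻¹ * levi u z s') := by
    rw [levi_exp hg2 t, hdg t, hdg _, hdrt, hdrIt,
      levi_const_mul hr2 δ⁻¹ t, hlevir]
    have habs : ‖s (Fin.last n)‖ ^ 2
        = (s (Fin.last n)).re ^ 2 + (s (Fin.last n)).im ^ 2 := by
      rw [Complex.sq_norm, Complex.normSq_apply]; ring
    rw [habs]
    field_simp
    ring
  rw [hρpart, hexplevi]
  -- LHS levi split
  have hLHS : levi (fun z' => u z' / δ + ρ z') z s'
      = δ⁻¹ * levi u z s' + levi ρ z s' := by
    have : (fun z' => u z' / δ + ρ z') = fun z' => δ⁻¹ * u z' + ρ z' := by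
      funext z'; rw [div_eq_inv_mul]
    rw [this, levi_add (contDiffAt_const.mul hu2) hρ2 s', levi_const_mul hu2 δ⁻¹ s']
  rw [hLHS]
  -- final numeric inequality
  have hpsh : 0 ≤ levi u z s' := hu.2 z hzV s'
  have hexple : Real.exp (-3) ≤ Real.exp (δ⁻¹ * rfun n u w) := by
    apply Real.exp_le_exp.mpr
    rw [inv_mul_eq_div, le_div_iff₀ hδ]
    linarith
  have habs0 : 0 ≤ ‖s (Fin.last n)‖ ^ 2 / δ ^ 2 :=
    div_nonneg (sq_nonneg _) (sq_nonneg _)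
  have hδ0 : 0 ≤ δ⁻¹ := inv_nonneg.mpr hδ.le
  nlinarith [mul_le_mul_of_nonneg_right hexple
    (add_nonneg habs0 (mul_nonneg hδ0 hpsh)), Real.exp_pos (-3 : ℝ)]

end
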